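/- arXiv:2209.12514 — 7 statements merged into one kernel-verified Lean document; each statement's English description precedes it below -/
import Mathlib

section
/- If A is a real n×n matrix with nonnegative off-diagonal entries, then the spectral bound s(A) = max{Re λ : λ ∈ spectrum(A)} is itself an eigenvalue of A. -/
/-!
For an entrywise nonnegative matrix `B` with spectral radius `ρ`, the Neumann series
`R(z) = ∑ z⁻¹ ^ (k + 1) • B ^ k` of the resolvent has nonnegative coefficients, so
`|R(z) i j| ≤ R(|z|) i j` for `|z| > ρ`. If `ρ` were not in the spectrum, `R(t)` would stay
bounded as `t ↓ ρ`, hence so would `R(z)` as `z` approaches radially a point `μ` of the spectrum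
with `|μ| = ρ`; but `‖R(z)‖ ≥ 1 / |z - μ|`. So `ρ ∈ σ(B)` (Perron–Frobenius), and `ρ` is then also
the largest real part of the spectrum. A matrix with nonnegative off-diagonal entries becomes
nonnegative after adding `c • 1`, which shifts the spectrum by `c`.
-/

open Matrix Filter Topology
open scoped ENNReal

namespace spectrum

theorem one_le_norm_sub_mul_norm_resolvent {𝕜 A : Type*} [NormedField 𝕜] [NormedRing A]
    [NormedAlgebra 𝕜 A] [HasSummableGeomSeries A] {a : A} {z μ : 𝕜} (hz : z ∈ resolventSet 𝕜 a)
    (hμ : μ ∈ spectrum 𝕜 a) : 1 ≤ ‖z - μ‖ * ‖resolvent a z‖ := by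
  by_contra! h
  have hsmall : ‖(z - μ) • resolvent a z‖ < 1 := (norm_smul_le _ _).trans_lt h
  have hfactor : algebraMap 𝕜 A μ - a
      = (algebraMap 𝕜 A z - a) * (1 - (z - μ) • resolvent a z) := by
    rw [mul_sub, mul_one, mul_smul_comm, resolvent, Ring.mul_inverse_cancel _ hz,
      Algebra.algebraMap_eq_smul_one, Algebra.algebraMap_eq_smul_one, sub_right_comm, ← sub_smul,
      sub_sub_cancel]
  exact hμ <| spectrum.mem_resolventSet_iff.mpr <| hfactor ▸ hz.mul (Units.oneSub _ hsmall).isUnit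

theorem isGreatest_re_sub_of_algebraMap_add {A : Type*} [Ring A] [Algebra ℂ A] (a : A) {c r : ℝ}
    (h : IsGreatest {x : ℝ | ∃ μ ∈ spectrum ℂ (algebraMap ℂ A c + a), x = μ.re} r) :
    IsGreatest {x : ℝ | ∃ μ ∈ spectrum ℂ a, x = μ.re} (r - c) := by
  obtain ⟨⟨ν, hν, rfl⟩, hmax⟩ := h
  refine ⟨⟨ν - c, add_mem_add_iff.mp (by rwa [sub_add_cancel]), by simp⟩, ?_⟩
  rintro _ ⟨μ, hμ, rfl⟩
  have := hmax ⟨μ + c, add_mem_add_iff.mpr hμ, rfl⟩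
  simp only [Complex.add_re, Complex.ofReal_re] at this
  linarith

section Complex

variable {A : Type*} [NormedRing A] [NormedAlgebra ℂ A] [CompleteSpace A]

theorem hasSum_inverse_one_sub_smul (a : A) {w : ℂ}
    (hw : (‖w‖₊ : ℝ≥0∞) < (spectralRadius ℂ a)⁻¹) :
    HasSum (fun k : ℕ => w ^ k • a ^ k) (Ring.inverse (1 - w • a)) := by
  obtain ⟨r, hwr, hr⟩ := ENNReal.lt_iff_exists_nnreal_btwn.mp hw
  have hr_pos : 0 < r := lt_of_le_of_lt zero_le (ENNReal.coe_lt_coe.mp hwr)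
  have hseries := (hasFPowerSeriesOnBall_inverse_one_sub_smul ℂ a).exchange_radius
    ((differentiableOn_inverse_one_sub_smul hr).hasFPowerSeriesOnBall hr_pos)
  simpa [ContinuousMultilinearMap.mkPiRing_apply] using
    hseries.hasSum (y := w) (by simpa [← coe_nnnorm] using hwr)

theorem hasSum_resolvent (a : A) {z : ℂ} (hz : spectralRadius ℂ a < ‖z‖₊) :
    HasSum (fun k : ℕ => z⁻¹ ^ (k + 1) • a ^ k) (resolvent a z) := by
  have hz0 : z ≠ 0 := by rintro rfl; simp at hz
  have hw : (‖z⁻¹‖₊ : ℝ≥0∞) < (spectralRadius ℂ a)⁻¹ := by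
    rwa [nnnorm_inv, ENNReal.coe_inv (nnnorm_ne_zero_iff.mpr hz0), ENNReal.inv_lt_inv]
  have h := (hasSum_inverse_one_sub_smul a hw).const_smul z⁻¹
  have hres := units_smul_resolvent_self (r := Units.mk0 z hz0) (a := a)
  simp only [Units.smul_def, Units.val_inv_eq_inv_val, Units.val_mk0, resolvent, map_one] at hres
  rw [← hres, smul_smul, inv_mul_cancel₀ hz0, one_smul] at h
  simpa only [resolvent, smul_smul, ← pow_succ'] using h

end Complex

end spectrum

namespace Matrix

-- Any algebra norm would do; the ℓ∞ operator norm is chosen because it is monotone in the moduli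
-- of the entries.
attribute [local instance] Matrix.linftyOpSeminormedAddCommGroup Matrix.linftyOpNormedRing
  Matrix.linftyOpNormedAlgebra

variable {ι : Type*} [Fintype ι] [DecidableEq ι]

theorem linfty_opNorm_mono {m n α : Type*} [Fintype m] [Fintype n] [SeminormedAddCommGroup α]
    {N N' : Matrix m n α} (h : ∀ i j, ‖N i j‖ ≤ ‖N' i j‖) : ‖N‖ ≤ ‖N'‖ := by
  simp only [linfty_opNorm_def, NNReal.coe_le_coe]
  exact Finset.sup_mono_fun fun i _ => Finset.sum_le_sum fun j _ => h i j

theorem map_ofReal_pow_apply (B : Matrix ι ι ℝ) (k : ℕ) (i j : ι) :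
    (B.map (fun r => (r : ℂ)) ^ k) i j = ((B ^ k) i j : ℂ) :=
  (congrFun₂ (Matrix.map_pow B Complex.ofRealHom k) i j).symm

theorem norm_resolvent_map_ofReal_apply_le {B : Matrix ι ι ℝ} (hB : ∀ i j, 0 ≤ B i j) {z : ℂ}
    (hz : spectralRadius ℂ (B.map (fun r => (r : ℂ))) < ‖z‖₊) (i j : ι) :
    ‖resolvent (B.map (fun r => (r : ℂ))) z i j‖
      ≤ ‖resolvent (B.map (fun r => (r : ℂ))) (‖z‖ : ℂ) i j‖ := by
  have hentry : ∀ w : ℂ, spectralRadius ℂ (B.map (fun r => (r : ℂ))) < ‖w‖₊ →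
      HasSum (fun k : ℕ => w⁻¹ ^ (k + 1) * ((B ^ k) i j : ℂ))
        (resolvent (B.map (fun r => (r : ℂ))) w i j) := fun w hw => by
    have h := (spectrum.hasSum_resolvent _ hw).map (entryAddMonoidHom ℂ i j)
      (continuous_id.matrix_elem i j)
    simpa only [Function.comp_def, entryAddMonoidHom_apply, smul_apply, smul_eq_mul,
      map_ofReal_pow_apply] using h
  have hreal : HasSum (fun k : ℕ => ‖z‖⁻¹ ^ (k + 1) * (B ^ k) i j)
      (resolvent (B.map (fun r => (r : ℂ))) (‖z‖ : ℂ) i j).re := by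
    simpa only [← Complex.ofReal_inv, ← Complex.ofReal_pow, ← Complex.ofReal_mul,
      Complex.ofReal_re] using Complex.hasSum_re (hentry (‖z‖ : ℂ) (by simpa using hz))
  calc ‖resolvent (B.map (fun r => (r : ℂ))) z i j‖
      ≤ (resolvent (B.map (fun r => (r : ℂ))) (‖z‖ : ℂ) i j).re :=
        (hentry z hz).norm_le_of_bounded hreal fun k => by
          rw [norm_mul, norm_pow, norm_inv, Complex.norm_real,
            Real.norm_of_nonneg (pow_apply_nonneg hB k i j)]
    _ ≤ _ := Complex.re_le_norm _

theorem norm_resolvent_map_ofReal_le {B : Matrix ι ι ℝ} (hB : ∀ i j, 0 ≤ B i j) {z : ℂ}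
    (hz : spectralRadius ℂ (B.map (fun r => (r : ℂ))) < ‖z‖₊) :
    ‖resolvent (B.map (fun r => (r : ℂ))) z‖ ≤ ‖resolvent (B.map (fun r => (r : ℂ))) (‖z‖ : ℂ)‖ :=
  linfty_opNorm_mono (norm_resolvent_map_ofReal_apply_le hB hz)

theorem one_le_sub_norm_mul_norm_resolvent_map_ofReal {B : Matrix ι ι ℝ} (hB : ∀ i j, 0 ≤ B i j)
    {μ : ℂ} (hμ : μ ∈ spectrum ℂ (B.map (fun r => (r : ℂ)))) (hμ0 : μ ≠ 0)
    (hρ : spectralRadius ℂ (B.map (fun r => (r : ℂ))) = ‖μ‖₊) {t : ℝ} (ht : ‖μ‖ < t) :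
    1 ≤ (t - ‖μ‖) * ‖resolvent (B.map (fun r => (r : ℂ))) (t : ℂ)‖ := by
  have hμ_pos : 0 < ‖μ‖ := norm_pos_iff.mpr hμ0
  have hscale : 1 ≤ t / ‖μ‖ := (one_le_div hμ_pos).mpr ht.le
  set z : ℂ := ((t / ‖μ‖ : ℝ) : ℂ) * μ
  have hz_norm : ‖z‖ = t := by
    rw [norm_mul, Complex.norm_real, Real.norm_of_nonneg (by linarith),
      div_mul_cancel₀ _ hμ_pos.ne']
  have hz_sub : ‖z - μ‖ = t - ‖μ‖ := by
    have : z - μ = ((t / ‖μ‖ - 1 : ℝ) : ℂ) * μ := by simp only [z]; push_cast; ring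
    rw [this, norm_mul, Complex.norm_real, Real.norm_of_nonneg (by linarith), sub_mul,
      div_mul_cancel₀ _ hμ_pos.ne', one_mul]
  have hz : spectralRadius ℂ (B.map (fun r => (r : ℂ))) < ‖z‖₊ := by
    rw [hρ, ENNReal.coe_lt_coe, ← NNReal.coe_lt_coe, coe_nnnorm, coe_nnnorm, hz_norm]
    exact ht
  calc 1 ≤ ‖z - μ‖ * ‖resolvent (B.map (fun r => (r : ℂ))) z‖ :=
        spectrum.one_le_norm_sub_mul_norm_resolvent
          (spectrum.mem_resolventSet_of_spectralRadius_lt hz) hμ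
    _ ≤ (t - ‖μ‖) * ‖resolvent (B.map (fun r => (r : ℂ))) (t : ℂ)‖ := by
        rw [hz_sub, ← hz_norm]
        gcongr
        · linarith
        · exact norm_resolvent_map_ofReal_le hB hz

theorem ofReal_toReal_spectralRadius_mem_spectrum_map_ofReal [Nonempty ι] {B : Matrix ι ι ℝ}
    (hB : ∀ i j, 0 ≤ B i j) :
    ((spectralRadius ℂ (B.map (fun r => (r : ℂ)))).toReal : ℂ)
      ∈ spectrum ℂ (B.map (fun r => (r : ℂ))) := by
  obtain ⟨μ, hμ, hμρ⟩ := spectrum.exists_nnnorm_eq_spectralRadius (B.map (fun r => (r : ℂ)))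
  rw [← hμρ, ENNReal.coe_toReal, coe_nnnorm]
  rcases eq_or_ne μ 0 with rfl | hμ0
  · simpa using hμ
  intro hres
  have hcont : ContinuousAt
      (fun t : ℝ => (t - ‖μ‖) * ‖resolvent (B.map (fun r => (r : ℂ))) (t : ℂ)‖) ‖μ‖ :=
    (continuousAt_id.sub continuousAt_const).mul
      ((spectrum.hasDerivAt_resolvent_const_left hres).continuousAt.comp
        Complex.continuous_ofReal.continuousAt).norm
  have hlim : Tendsto (fun t : ℝ => (t - ‖μ‖) * ‖resolvent (B.map (fun r => (r : ℂ))) (t : ℂ)‖)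
      (𝓝[>] ‖μ‖) (𝓝 0) := by
    simpa using hcont.tendsto.mono_left nhdsWithin_le_nhds
  have := ge_of_tendsto hlim (eventually_nhdsWithin_of_forall fun t ht =>
    one_le_sub_norm_mul_norm_resolvent_map_ofReal hB hμ hμ0 hμρ.symm ht)
  norm_num at this

theorem isGreatest_re_spectrum_map_ofReal [Nonempty ι] {B : Matrix ι ι ℝ}
    (hB : ∀ i j, 0 ≤ B i j) :
    IsGreatest {x : ℝ | ∃ μ ∈ spectrum ℂ (B.map (fun r => (r : ℂ))), x = μ.re}
      (spectralRadius ℂ (B.map (fun r => (r : ℂ)))).toReal := by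
  refine ⟨⟨_, ofReal_toReal_spectralRadius_mem_spectrum_map_ofReal hB,
    (Complex.ofReal_re _).symm⟩, ?_⟩
  rintro _ ⟨μ, hμ, rfl⟩
  have hρ_top : spectralRadius ℂ (B.map (fun r => (r : ℂ))) ≠ ⊤ :=
    ((spectrum.spectralRadius_le_nnnorm _).trans_lt ENNReal.coe_lt_top).ne
  calc μ.re ≤ ‖μ‖ := Complex.re_le_norm μ
    _ ≤ _ := by simpa using ENNReal.toReal_mono hρ_top (le_iSup₂ (α := ℝ≥0∞) μ hμ)

theorem exists_diagonal_add_nonneg {A : Matrix ι ι ℝ} (hA : ∀ i j, i ≠ j → 0 ≤ A i j) :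
    ∃ c : ℝ, ∀ i j, 0 ≤ (diagonal (fun _ => c) + A : Matrix ι ι ℝ) i j := by
  obtain ⟨c, hc⟩ := Finite.exists_le (fun i => -A i i)
  refine ⟨c, fun i j => ?_⟩
  rcases eq_or_ne i j with rfl | hij
  · simpa using neg_le_iff_add_nonneg.mp (hc i)
  · simpa [hij] using hA i j hij

theorem map_ofReal_diagonal_add (A : Matrix ι ι ℝ) (c : ℝ) :
    (diagonal (fun _ => c) + A).map (fun r => (r : ℂ))
      = algebraMap ℂ (Matrix ι ι ℂ) c + A.map (fun r => (r : ℂ)) := by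
  ext i j
  rcases eq_or_ne i j with rfl | hij <;> simp [algebraMap_matrix_apply, *]

end Matrix

/-- If `A` is a real `n×n` matrix (`n ≥ 1`) with nonnegative off-diagonal
entries, then the spectral bound `s(A) = max {Re λ : λ ∈ spectrum A}` is itself an
eigenvalue of `A`. -/
theorem spectral_bound_is_eigenvalue (n : ℕ) (hn : 0 < n)
    (A : Matrix (Fin n) (Fin n) ℝ)
    (hoff : ∀ i j, i ≠ j → 0 ≤ A i j)
    (s : ℝ)
    (hs : IsGreatest {x : ℝ | ∃ μ ∈ spectrum ℂ (A.map (fun r => (r : ℂ))), x = μ.re} s) :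
    (s : ℂ) ∈ spectrum ℂ (A.map (fun r => (r : ℂ))) := by
  have : Nonempty (Fin n) := ⟨⟨0, hn⟩⟩
  obtain ⟨c, hB⟩ := exists_diagonal_add_nonneg hoff
  have hbound := isGreatest_re_spectrum_map_ofReal hB
  have hmem := ofReal_toReal_spectralRadius_mem_spectrum_map_ofReal hB
  rw [map_ofReal_diagonal_add] at hbound hmem
  rw [hs.unique (spectrum.isGreatest_re_sub_of_algebraMap_add _ hbound)]
  exact (spectrum.add_mem_add_iff (s := (c : ℂ))).mp (by simpa using hmem)
end

section
/- If A is a real n×n matrix with nonnegative off-diagonal entries, then there exists a nonzero vector v with all components nonnegative such that A v = s(A) v, where s(A) is the spectral bound of A. -/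
/-!
Adding `c • 1` to `A` makes it entrywise nonnegative and shifts every eigenvalue by `c`, so the
point is a Perron–Frobenius statement for a nonnegative matrix `B = A + c • 1`. If `B z = ν z`
with `z` complex, the triangle inequality gives `‖ν‖ |z| ≤ B |z|`. When `B` is entrywise positive,
maximise `t` over the compact set of pairs `(x, t)` with `x` in the standard simplex and
`t x ≤ B x`: at a maximiser `B x = t x`, for otherwise `B` maps the nonzero vector `B x - t x ≥ 0`
to a positive one and `B x` would admit a larger `t`. A general nonnegative `B` is the limit of
the positive matrices with entries `B i j + ε`, whose normalised eigenpairs accumulate by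
compactness. Applied to
`ν = μ + c` with `Re μ = s`, this yields a nonnegative eigenvector of `A` whose real eigenvalue
`λ` satisfies `s ≤ λ`, and `λ ≤ s` by the maximality of `s`.
-/

open Matrix Finset Filter Topology

theorem ne_zero_of_mem_stdSimplex {ι : Type*} [Fintype ι] {x : ι → ℝ}
    (hx : x ∈ stdSimplex ℝ ι) : x ≠ 0 := by
  rintro rfl
  simp [stdSimplex] at hx

namespace Matrix

variable {ι : Type*} [Fintype ι]

theorem mem_spectrum_iff_exists_mulVec_eq_smul {K : Type*} [Field K] [DecidableEq ι]
    {M : Matrix ι ι K} {μ : K} : μ ∈ spectrum K M ↔ ∃ z, z ≠ 0 ∧ M *ᵥ z = μ • z := by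
  rw [← spectrum_toLin', ← Module.End.hasEigenvalue_iff_mem_spectrum]
  constructor
  · intro h
    obtain ⟨z, hz⟩ := h.exists_hasEigenvector
    exact ⟨z, hz.2, hz.apply_eq_smul⟩
  · rintro ⟨z, hz0, hz⟩
    exact Module.End.hasEigenvalue_of_hasEigenvector ⟨Module.End.mem_eigenspace_iff.2 hz, hz0⟩

theorem map_mem_spectrum_of_mulVec_eq_smul {K L : Type*} [Field K] [Field L] [DecidableEq ι]
    (f : K →+* L) {A : Matrix ι ι K} {x : ι → K} {t : K} (hx : x ≠ 0) (h : A *ᵥ x = t • x) :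
    f t ∈ spectrum L (A.map f) := by
  refine mem_spectrum_iff_exists_mulVec_eq_smul.2 ⟨f ∘ x, ?_, ?_⟩
  · exact fun h0 => hx (funext fun i => f.injective (by simpa using congrFun h0 i))
  · ext i
    rw [← RingHom.map_mulVec, h]
    simp

variable {B B' : Matrix ι ι ℝ}

theorem mulVec_nonneg (hB : ∀ i j, 0 ≤ B i j) {x : ι → ℝ} (hx : 0 ≤ x) : 0 ≤ B *ᵥ x :=
  fun i => sum_nonneg fun j _ => mul_nonneg (hB i j) (hx j)

theorem mulVec_le_mulVec_of_le (h : ∀ i j, B i j ≤ B' i j) {x : ι → ℝ} (hx : 0 ≤ x) :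
    B *ᵥ x ≤ B' *ᵥ x :=
  fun i => sum_le_sum fun j _ => mul_le_mul_of_nonneg_right (h i j) (hx j)

theorem mulVec_pos (hB : ∀ i j, 0 < B i j) {x : ι → ℝ} (hx : 0 ≤ x) (hx0 : x ≠ 0) (i : ι) :
    0 < (B *ᵥ x) i := by
  obtain ⟨-, j, hj⟩ := Pi.lt_def.1 (hx.lt_of_ne (Ne.symm hx0))
  exact sum_pos' (fun k _ => mul_nonneg (hB i k).le (hx k)) ⟨j, mem_univ j, mul_pos (hB i j) hj⟩

theorem le_sum_sum_of_smul_le_mulVec (hB : ∀ i j, 0 ≤ B i j) {x : ι → ℝ}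
    (hx : x ∈ stdSimplex ℝ ι) {t : ℝ} (h : t • x ≤ B *ᵥ x) : t ≤ ∑ i, ∑ j, B i j :=
  calc t = ∑ i, t * x i := by rw [← mul_sum, hx.2, mul_one]
    _ ≤ ∑ i, (B *ᵥ x) i := sum_le_sum fun i _ => h i
    _ ≤ ∑ i, ∑ j, B i j := sum_le_sum fun i _ => sum_le_sum fun j _ =>
        mul_le_of_le_one_right (hB i j) (mem_Icc_of_mem_stdSimplex hx j).2

theorem exists_mem_stdSimplex_smul_le_mulVec {y : ι → ℝ} (hy : 0 ≤ y) (hy0 : y ≠ 0) {t : ℝ}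
    (h : t • y ≤ B *ᵥ y) : ∃ x ∈ stdSimplex ℝ ι, t • x ≤ B *ᵥ x := by
  obtain ⟨-, j, hj⟩ := Pi.lt_def.1 (hy.lt_of_ne (Ne.symm hy0))
  have hsum : 0 < ∑ i, y i := sum_pos' (fun i _ => hy i) ⟨j, mem_univ j, hj⟩
  refine ⟨(∑ i, y i)⁻¹ • y, ⟨fun i => ?_, ?_⟩, ?_⟩
  · exact mul_nonneg (inv_nonneg.2 hsum.le) (hy i)
  · simp [← mul_sum, hsum.ne']
  · rw [smul_comm, mulVec_smul]
    exact smul_le_smul_of_nonneg_left h (inv_nonneg.2 hsum.le)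

theorem smul_norm_le_mulVec_norm (hB : ∀ i j, 0 ≤ B i j) {z : ι → ℂ} {μ : ℂ}
    (hz : B.map (↑) *ᵥ z = μ • z) : ‖μ‖ • (fun i => ‖z i‖) ≤ B *ᵥ fun i => ‖z i‖ := by
  intro i
  calc ‖μ‖ * ‖z i‖ = ‖(B.map (↑) *ᵥ z) i‖ := by simp [hz]
    _ ≤ ∑ j, ‖(B i j : ℂ) * z j‖ := norm_sum_le _ _
    _ = (B *ᵥ fun i => ‖z i‖) i := by
        simp [mulVec, dotProduct, Complex.norm_real, abs_of_nonneg (hB _ _)]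

def subinvariantPairs (B : Matrix ι ι ℝ) (r : ℝ) : Set ((ι → ℝ) × ℝ) :=
  {p | p.1 ∈ stdSimplex ℝ ι ∧ r ≤ p.2 ∧ p.2 • p.1 ≤ B *ᵥ p.1}

theorem isCompact_subinvariantPairs (hB : ∀ i j, 0 ≤ B i j) (r : ℝ) :
    IsCompact (subinvariantPairs B r) := by
  refine ((isCompact_stdSimplex ℝ ι).prod (isCompact_Icc (a := r) (b := ∑ i, ∑ j, B i j)))
    |>.of_isClosed_subset ?_
      fun p hp => ⟨hp.1, hp.2.1, le_sum_sum_of_smul_le_mulVec hB hp.1 hp.2.2⟩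
  exact ((isClosed_stdSimplex ℝ ι).preimage continuous_fst).inter
    ((isClosed_le continuous_const continuous_snd).inter
      (isClosed_le (continuous_snd.smul continuous_fst)
        (continuous_const.matrix_mulVec continuous_fst)))

theorem exists_mem_stdSimplex_mulVec_eq_smul_of_pos (hB : ∀ i j, 0 < B i j) {y : ι → ℝ}
    (hy : 0 ≤ y) (hy0 : y ≠ 0) {r : ℝ} (hr : r • y ≤ B *ᵥ y) :
    ∃ x ∈ stdSimplex ℝ ι, ∃ t, r ≤ t ∧ B *ᵥ x = t • x := by
  have hB' : ∀ i j, 0 ≤ B i j := fun i j => (hB i j).le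
  obtain ⟨x₀, hx₀, h₀⟩ := exists_mem_stdSimplex_smul_le_mulVec hy hy0 hr
  obtain ⟨⟨x, t⟩, ⟨hx, hrt, hxt⟩, hmax⟩ := (isCompact_subinvariantPairs hB' r).exists_isMaxOn
    ⟨(x₀, r), hx₀, le_rfl, h₀⟩ continuous_snd.continuousOn
  refine ⟨x, hx, t, hrt, by_contra fun hne => ?_⟩
  have hstrict : ∀ i, t * (B *ᵥ x) i < (B *ᵥ B *ᵥ x) i := by
    intro i
    simpa [mulVec_sub, mulVec_smul] using
      mulVec_pos hB (sub_nonneg.2 hxt) (sub_ne_zero.2 hne) i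
  obtain ⟨t', ht', htt'⟩ : ∃ t', t' • (B *ᵥ x) ≤ B *ᵥ B *ᵥ x ∧ t < t' := by
    have : ∀ᶠ t' in 𝓝 t, ∀ i, t' * (B *ᵥ x) i < (B *ᵥ B *ᵥ x) i := eventually_all.2 fun i =>
      (continuous_id.mul continuous_const).continuousAt.eventually_lt continuousAt_const
        (hstrict i)
    exact ((this.filter_mono (nhdsWithin_le_nhds (s := Set.Ioi t))).and
      self_mem_nhdsWithin).exists.imp fun t' h => ⟨fun i => (h.1 i).le, h.2⟩
  have hBx : B *ᵥ x ≠ 0 := by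
    obtain ⟨i, -⟩ := Function.ne_iff.1 (ne_zero_of_mem_stdSimplex hx)
    exact fun h0 => by simpa [h0] using mulVec_pos hB hx.1 (ne_zero_of_mem_stdSimplex hx) i
  obtain ⟨x', hx', h'⟩ := exists_mem_stdSimplex_smul_le_mulVec (mulVec_nonneg hB' hx.1) hBx ht'
  exact not_lt.2 (hmax (show (x', t') ∈ subinvariantPairs B r from
    ⟨hx', hrt.trans htt'.le, h'⟩)) htt'

theorem exists_mem_stdSimplex_mulVec_eq_smul_of_nonneg (hB : ∀ i j, 0 ≤ B i j) {y : ι → ℝ}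
    (hy : 0 ≤ y) (hy0 : y ≠ 0) {r : ℝ} (hr : r • y ≤ B *ᵥ y) :
    ∃ x ∈ stdSimplex ℝ ι, ∃ t, r ≤ t ∧ B *ᵥ x = t • x := by
  let P : ℝ → Matrix ι ι ℝ := fun ε => of fun i j => B i j + ε
  let C := ∑ i, ∑ j, P 1 i j
  let F : Set (ℝ × (ι → ℝ) × ℝ) := (Set.Icc 0 1 ×ˢ stdSimplex ℝ ι ×ˢ Set.Icc r C) ∩
    {q | P q.1 *ᵥ q.2.1 = q.2.2 • q.2.1}
  have hF : IsCompact F :=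
    (isCompact_Icc.prod ((isCompact_stdSimplex ℝ ι).prod isCompact_Icc)).inter_right
      (isClosed_eq (by fun_prop) (by fun_prop))
  have hpos : Set.Ioc 0 1 ⊆ Prod.fst '' F := by
    rintro ε ⟨hε0, hε1⟩
    obtain ⟨x, hx, t, hrt, hxt⟩ := exists_mem_stdSimplex_mulVec_eq_smul_of_pos (B := P ε)
      (fun i j => add_pos_of_nonneg_of_pos (hB i j) hε0) hy hy0
      (hr.trans (mulVec_le_mulVec_of_le (fun i j => le_add_of_nonneg_right hε0.le) hy))
    have htC : t ≤ C :=
      (le_sum_sum_of_smul_le_mulVec (fun i j => add_nonneg (hB i j) hε0.le) hx hxt.ge).trans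
        (sum_le_sum fun i _ => sum_le_sum fun j _ => add_le_add_right hε1 _)
    exact ⟨(ε, x, t), ⟨⟨⟨hε0.le, hε1⟩, hx, hrt, htC⟩, hxt⟩, rfl⟩
  obtain ⟨⟨ε, x, t⟩, ⟨⟨-, hx, hrt, -⟩, hxt⟩, rfl⟩ : (0 : ℝ) ∈ Prod.fst '' F :=
    (hF.image continuous_fst).isClosed.closure_subset_iff.2 hpos
      (by rw [closure_Ioc zero_ne_one]; exact ⟨le_rfl, zero_le_one⟩)
  exact ⟨x, hx, t, hrt, by simpa [show P 0 = B by ext; simp [P]] using hxt⟩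

theorem exists_nonneg_add_smul_one [DecidableEq ι] {A : Matrix ι ι ℝ}
    (hA : ∀ i j, i ≠ j → 0 ≤ A i j) : ∃ c : ℝ, ∀ i j, 0 ≤ (A + c • 1) i j := by
  refine ⟨∑ i, |A i i|, fun i j => ?_⟩
  rcases eq_or_ne i j with rfl | hij
  · have := single_le_sum (fun k _ => abs_nonneg (A k k)) (mem_univ i)
    have := neg_abs_le (A i i)
    simp only [add_apply, smul_apply, one_apply_eq, smul_eq_mul, mul_one]
    linarith
  · simpa [one_apply_ne hij] using hA i j hij

end Matrix

theorem exists_nonneg_eigenvector_of_spectral_bound_general (n : ℕ)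
    (A : Matrix (Fin n) (Fin n) ℝ)
    (hoff : ∀ i j, i ≠ j → 0 ≤ A i j)
    (s : ℝ)
    (hs : IsGreatest {x : ℝ | ∃ μ ∈ spectrum ℂ (A.map (fun r => (r : ℂ))), x = μ.re} s) :
    ∃ v : Fin n → ℝ, v ≠ 0 ∧ (∀ i, 0 ≤ v i) ∧ A.mulVec v = s • v := by
  obtain ⟨μ, hμ, rfl⟩ := hs.1
  obtain ⟨z, hz0, hz⟩ := mem_spectrum_iff_exists_mulVec_eq_smul.1 hμ
  obtain ⟨c, hc⟩ := exists_nonneg_add_smul_one hoff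
  have hBz : (A + c • 1).map (↑) *ᵥ z = (μ + c) • z := by
    rw [Matrix.map_add, add_mulVec, hz, Matrix.map_smul, Matrix.map_one] <;>
      simp [smul_mulVec, add_smul]
  obtain ⟨x, hx, t, ht, hxt⟩ := exists_mem_stdSimplex_mulVec_eq_smul_of_nonneg hc
    (fun i => norm_nonneg (z i)) (fun h => hz0 (funext fun i => norm_eq_zero.1 (congrFun h i)))
    (smul_norm_le_mulVec_norm hc hBz)
  have hAx : A *ᵥ x = (t - c) • x := by
    rw [add_mulVec, smul_mulVec, one_mulVec] at hxt
    rw [sub_smul, ← hxt, add_sub_cancel_right]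
  have hle : t - c ≤ μ.re := hs.2 ⟨_, map_mem_spectrum_of_mulVec_eq_smul Complex.ofRealHom
    (ne_zero_of_mem_stdSimplex hx) hAx, by simp⟩
  have hge : μ.re + c ≤ t := by simpa using (Complex.re_le_norm (μ + c)).trans ht
  exact ⟨x, ne_zero_of_mem_stdSimplex hx, hx.1, by rw [hAx, show t - c = μ.re by linarith]⟩

/-- If `A` is a real `n×n` matrix with nonnegative off-diagonal entries,
then there exists a nonzero vector `v ≥ 0` with `A v = s(A) v`, where `s(A)` is the
spectral bound of `A`. -/
theorem exists_nonneg_eigenvector_of_spectral_bound (n : ℕ) (hn : 0 < n)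
    (A : Matrix (Fin n) (Fin n) ℝ)
    (hoff : ∀ i j, i ≠ j → 0 ≤ A i j)
    (s : ℝ)
    (hs : IsGreatest {x : ℝ | ∃ μ ∈ spectrum ℂ (A.map (fun r => (r : ℂ))), x = μ.re} s) :
    ∃ v : Fin n → ℝ, v ≠ 0 ∧ (∀ i, 0 ≤ v i) ∧ A.mulVec v = s • v :=
  exists_nonneg_eigenvector_of_spectral_bound_general n A hoff s hs
end

section
/- If C is an irreducible Kolmogorov matrix, then 0 is a simple eigenvalue of C (algebraic multiplicity one) and every other eigenvalue of C has strictly negative real part. -/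
/-!
Both parts rest on the column form of Gershgorin's argument: if `w ᵥ* C = μ • w` and `|w j|` is
maximal, the `j`-th column gives `|μ - C j j| ≤ ∑_{k ≠ j} C k j = -C j j`, a disc in the closed
left half-plane touching the imaginary axis only at `0`.

For the simplicity of `0`, the coefficient of `X` in the characteristic polynomial is the sum of
`det (-B)` over the principal submatrices `B` of order `n - 1`. Such a `B` has no left eigenvalue
`t ≥ 0`: for a left eigenvector `w` (extended by zero), equality must hold throughout the
Gershgorin estimate at every coordinate where `|w|` is maximal, so the set of those coordinates is
closed under the nonzero entries of `C`, against irreducibility. Hence the monic polynomial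
`charpoly B` has no root in `[0, ∞)`, and `det (-B) = (charpoly B).eval 0 > 0`.
-/

open Matrix

/-- A matrix is irreducible if there is no nontrivial subset `S` of indices with
`A i j = 0` for all `i ∈ S`, `j ∉ S`. -/
def MatIrreducible {n : ℕ} (A : Matrix (Fin n) (Fin n) ℝ) : Prop :=
  ¬ ∃ S : Set (Fin n), S.Nonempty ∧ Sᶜ.Nonempty ∧ ∀ i ∈ S, ∀ j ∉ S, A i j = 0

open Polynomial Finset

theorem Polynomial.rootMultiplicity_zero_eq_one {R : Type*} [CommRing R] {p : R[X]}
    (h0 : p.coeff 0 = 0) (h1 : p.coeff 1 ≠ 0) : p.rootMultiplicity 0 = 1 := by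
  have hp : p ≠ 0 := fun h => h1 (by simp [h])
  rw [rootMultiplicity_eq_natTrailingDegree']
  refine le_antisymm (natTrailingDegree_le_of_ne_zero h1) (le_natTrailingDegree hp fun m hm => ?_)
  rwa [Nat.lt_one_iff.mp hm]

theorem Polynomial.Monic.eval_pos_of_forall_ge_eval_ne_zero {p : ℝ[X]} (hp : p.Monic) {a : ℝ}
    (h : ∀ x, a ≤ x → p.eval x ≠ 0) : 0 < p.eval a := by
  obtain ⟨b, hab, hb⟩ : ∃ b, a ≤ b ∧ 0 ≤ p.eval b := by
    rcases eq_or_ne p.natDegree 0 with h0 | h0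
    · exact ⟨a, le_rfl, by simp [hp.natDegree_eq_zero.mp h0]⟩
    · have htop := tendsto_atTop_of_leadingCoeff_nonneg p
        (natDegree_pos_iff_degree_pos.mp (Nat.pos_of_ne_zero h0)) (by simp [hp.leadingCoeff])
      exact ((htop.eventually_ge_atTop 0).and (Filter.eventually_ge_atTop a)).exists.imp
        fun b hb => ⟨hb.2, hb.1⟩
  by_contra! ha
  obtain ⟨x, hx, hx0⟩ := intermediate_value_Icc hab p.continuous.continuousOn ⟨ha, hb⟩
  exact h x hx.1 hx0

theorem Complex.re_neg_of_norm_sub_ofReal_le {μ : ℂ} {c : ℝ} (h : ‖μ - c‖ ≤ -c) (hμ : μ ≠ 0) :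
    μ.re < 0 := by
  have hc : c ≤ 0 := by linarith [norm_nonneg (μ - c)]
  have hsq : (μ.re - c) ^ 2 + μ.im ^ 2 ≤ c ^ 2 := by
    have := pow_le_pow_left₀ (norm_nonneg _) h 2
    rwa [Complex.sq_norm, Complex.normSq_apply, Complex.sub_re, Complex.sub_im,
      Complex.ofReal_re, Complex.ofReal_im, sub_zero, ← sq, ← sq, neg_sq] at this
  by_contra! hre
  exact hμ (Complex.ext (by rw [Complex.zero_re]; nlinarith) (by rw [Complex.zero_im]; nlinarith))

namespace Matrix

variable {ι : Type*} [Fintype ι]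

structure IsKolmogorov (C : Matrix ι ι ℝ) : Prop where
  nonneg_of_ne : ∀ i j, i ≠ j → 0 ≤ C i j
  sum_col_eq_zero : ∀ j, ∑ i, C i j = 0

variable [DecidableEq ι]

namespace IsKolmogorov

variable {C : Matrix ι ι ℝ}

theorem sum_erase_eq_neg_diag (hC : C.IsKolmogorov) (j : ι) :
    ∑ i ∈ univ.erase j, C i j = -C j j := by
  linarith [add_sum_erase univ (fun i => C i j) (mem_univ j), hC.sum_col_eq_zero j]

theorem det_eq_zero [Nonempty ι] (hC : C.IsKolmogorov) : C.det = 0 :=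
  exists_vecMul_eq_zero_iff.mp ⟨1, one_ne_zero, funext fun j => by
    simpa [vecMul, dotProduct] using hC.sum_col_eq_zero j⟩

theorem charpoly_coeff_zero [Nonempty ι] (hC : C.IsKolmogorov) : C.charpoly.coeff 0 = 0 := by
  simpa [hC.det_eq_zero] using (det_eq_sign_charpoly_coeff C).symm

theorem abs_eq_of_vecMul_apply_eq (hC : C.IsKolmogorov) {w : ι → ℝ} {t : ℝ} (ht : 0 ≤ t)
    {j : ι} (hj : ∀ k, |w k| ≤ |w j|) (hwj : (w ᵥ* C) j = t * w j) {k : ι} (hkj : C k j ≠ 0) :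
    |w k| = |w j| := by
  have hoff : ∀ k ∈ univ.erase j, 0 ≤ C k j := fun k hk =>
    hC.nonneg_of_ne k j (ne_of_mem_erase hk)
  have hdiag : C j j ≤ 0 := by
    linarith [hC.sum_erase_eq_neg_diag j, sum_nonneg hoff]
  have heq : (t - C j j) * w j = ∑ k ∈ univ.erase j, w k * C k j := by
    rw [vecMul, dotProduct, ← add_sum_erase _ _ (mem_univ j)] at hwj
    linarith
  have hterm : ∀ k ∈ univ.erase j, 0 ≤ C k j * (|w j| - |w k|) := fun k hk =>
    mul_nonneg (hoff k hk) (sub_nonneg.mpr (hj k))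
  have hsum : ∑ k ∈ univ.erase j, C k j * (|w j| - |w k|) ≤ 0 :=
    calc ∑ k ∈ univ.erase j, C k j * (|w j| - |w k|)
        = -C j j * |w j| - ∑ k ∈ univ.erase j, |w k * C k j| := by
          simp_rw [mul_sub, sum_sub_distrib, ← sum_mul, hC.sum_erase_eq_neg_diag]
          congr 1
          refine sum_congr rfl fun k hk => ?_
          rw [abs_mul, abs_of_nonneg (hoff k hk), mul_comm]
      _ ≤ -C j j * |w j| - |(t - C j j) * w j| := by
          rw [heq]
          gcongr
          exact abs_sum_le_sum_abs _ _
      _ = -t * |w j| := by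
          rw [abs_mul, abs_of_nonneg (show 0 ≤ t - C j j by linarith)]
          ring
      _ ≤ 0 := by nlinarith [abs_nonneg (w j)]
  obtain rfl | hk := eq_or_ne k j
  · rfl
  have := (sum_eq_zero_iff_of_nonneg hterm).mp (le_antisymm hsum (sum_nonneg hterm)) k
    (mem_erase.mpr ⟨hk, mem_univ k⟩)
  linarith [(mul_eq_zero.mp this).resolve_left hkj]

theorem exists_norm_sub_diag_le_of_mem_spectrum (hC : C.IsKolmogorov) {μ : ℂ}
    (hμ : μ ∈ spectrum ℂ (C.map ((↑) : ℝ → ℂ))) : ∃ k, ‖μ - C k k‖ ≤ -C k k := by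
  have : Module.End.HasEigenvalue (toLin' (C.map ((↑) : ℝ → ℂ))ᵀ) μ := by
    rwa [Module.End.hasEigenvalue_iff_isRoot_charpoly, Matrix.charpoly_toLin',
      charpoly_transpose, ← Matrix.mem_spectrum_iff_isRoot_charpoly]
  obtain ⟨k, hk⟩ := eigenvalue_mem_ball this
  refine ⟨k, ?_⟩
  rw [mem_closedBall_iff_norm] at hk
  have : ∀ i ∈ univ.erase k, ‖(C i k : ℂ)‖ = C i k := fun i hi => by
    rw [Complex.norm_real, Real.norm_of_nonneg (hC.nonneg_of_ne i k (ne_of_mem_erase hi))]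
  simp only [transpose_apply, map_apply] at hk
  rwa [sum_congr rfl this, hC.sum_erase_eq_neg_diag] at hk

end IsKolmogorov

end Matrix

namespace MatIrreducible

variable {n : ℕ} {C : Matrix (Fin n) (Fin n) ℝ}

theorem eq_zero_of_vecMul_eq_on (hirr : MatIrreducible C) (hC : C.IsKolmogorov)
    {s : Set (Fin n)} (hs : sᶜ.Nonempty) {w : Fin n → ℝ} (hw : ∀ i ∉ s, w i = 0)
    {t : ℝ} (ht : 0 ≤ t) (hwC : ∀ j ∈ s, (w ᵥ* C) j = t * w j) : w = 0 := by
  by_contra hw0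
  obtain ⟨i₀, hi₀⟩ := hs
  have : Nonempty (Fin n) := ⟨i₀⟩
  obtain ⟨j₀, hj₀⟩ := Finite.exists_max fun k => |w k|
  obtain ⟨k₀, hk₀⟩ := Function.ne_iff.mp hw0
  have hmax : 0 < |w j₀| := (abs_pos.mpr hk₀).trans_le (hj₀ k₀)
  have hmem : ∀ j, |w j| = |w j₀| → j ∈ s := fun j hj => by
    by_contra hjs
    simp [hw j hjs, hmax.ne] at hj
  refine hirr ⟨{k | |w k| = |w j₀|}ᶜ, ⟨i₀, ?_⟩, ⟨j₀, by simp⟩, fun i hi j hj => ?_⟩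
  · simp [hw i₀ hi₀, hmax.ne]
  · simp only [Set.mem_compl_iff, Set.mem_ofPred_eq, not_not] at hi hj
    by_contra hij
    exact hi ((hC.abs_eq_of_vecMul_apply_eq ht (hj ▸ hj₀) (hwC j (hmem j hj)) hij).trans hj)

theorem charpoly_submatrix_eval_ne_zero (hirr : MatIrreducible C) (hC : C.IsKolmogorov)
    {s : Finset (Fin n)} (hs : s ≠ univ) {t : ℝ} (ht : 0 ≤ t) :
    (C.submatrix ((↑) : s → Fin n) (↑)).charpoly.eval t ≠ 0 := by
  rw [eval_charpoly]
  intro hdet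
  obtain ⟨v, hv0, hv⟩ := exists_vecMul_eq_zero_iff.mpr hdet
  let w : Fin n → ℝ := fun i => if h : i ∈ s then v ⟨i, h⟩ else 0
  have hvB : v ᵥ* C.submatrix (↑) (↑) = t • v := by
    rw [vecMul_sub, sub_eq_zero] at hv
    simp [← hv]
  have hwC : ∀ j ∈ (s : Set (Fin n)), (w ᵥ* C) j = t * w j := by
    intro j hj
    have hwv : (w ᵥ* C) j = ∑ i : s, v i * C i j := by
      simp only [vecMul, dotProduct, w]
      rw [← sum_subset (subset_univ s) fun i _ hi => by simp [hi], ← sum_coe_sort s]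
      exact sum_congr rfl fun i _ => by simp
    rw [hwv, show w j = v ⟨j, hj⟩ from dif_pos hj]
    simpa [vecMul, dotProduct] using congrFun hvB ⟨j, hj⟩
  have hw0 := hirr.eq_zero_of_vecMul_eq_on hC (s := s)
    (Set.nonempty_compl.mpr (by simpa using hs)) (fun i hi => dif_neg hi) ht hwC
  exact hv0 (funext fun i => by simpa [w] using congrFun hw0 i)

theorem det_neg_submatrix_pos (hirr : MatIrreducible C) (hC : C.IsKolmogorov)
    {s : Finset (Fin n)} (hs : s ≠ univ) :
    0 < (-C.submatrix ((↑) : s → Fin n) (↑)).det := by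
  have := (charpoly_monic _).eval_pos_of_forall_ge_eval_ne_zero
    fun t ht => hirr.charpoly_submatrix_eval_ne_zero hC hs ht
  rwa [eval_charpoly, map_zero, zero_sub] at this

theorem charpoly_coeff_one_pos (hirr : MatIrreducible C) (hC : C.IsKolmogorov) (hn : 0 < n) :
    0 < C.charpoly.coeff 1 := by
  have h := C.charpoly_coeff_eq_sum_minors (n - 1) (by simp)
  rw [Fintype.card_fin, Nat.sub_sub_self hn] at h
  rw [h, mul_sum]
  refine sum_pos (fun s hs => ?_) (powersetCard_nonempty.mpr (by simp))
  have hcard : s.card = n - 1 := (mem_powersetCard.mp hs).2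
  have := hirr.det_neg_submatrix_pos hC (s := s) fun h => by
    rw [h, card_univ, Fintype.card_fin] at hcard
    omega
  rwa [det_neg, Fintype.card_coe, hcard] at this

end MatIrreducible

/-- If `C` is an irreducible Kolmogorov matrix, then `0` is a simple
eigenvalue of `C` (algebraic multiplicity one) and every other eigenvalue has
strictly negative real part. -/
theorem irreducible_kolmogorov_zero_simple_dominant (n : ℕ) (hn : 0 < n)
    (C : Matrix (Fin n) (Fin n) ℝ)
    (hoff : ∀ i j, i ≠ j → 0 ≤ C i j)
    (hcol : ∀ j, ∑ i, C i j = 0)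
    (hirr : MatIrreducible C) :
    (C.map (fun r => (r : ℂ))).charpoly.rootMultiplicity 0 = 1 ∧
    ∀ μ ∈ spectrum ℂ (C.map (fun r => (r : ℂ))), μ ≠ 0 → μ.re < 0 := by
  have hC : C.IsKolmogorov := ⟨hoff, hcol⟩
  have : Nonempty (Fin n) := ⟨⟨0, hn⟩⟩
  refine ⟨?_, fun μ hμ hμ0 => ?_⟩
  · rw [show C.map (fun r => (r : ℂ)) = C.map Complex.ofRealHom from rfl, charpoly_map]
    refine rootMultiplicity_zero_eq_one ?_ ?_ <;> rw [coeff_map]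
    · simp [hC.charpoly_coeff_zero]
    · exact Complex.ofReal_ne_zero.mpr (hirr.charpoly_coeff_one_pos hC hn).ne'
  · obtain ⟨k, hk⟩ := hC.exists_norm_sub_diag_le_of_mem_spectrum hμ
    exact Complex.re_neg_of_norm_sub_ofReal_le hk hμ0
end

section
/- If C is a Kolmogorov matrix (not necessarily irreducible), then 0 is an eigenvalue of C admitting a right eigenvector k with all components nonnegative and k ≠ 0. -/
/-!
If `C` killed no point of the standard simplex `Δ`, Hahn–Banach would strictly separate the
compact convex set `C(Δ)` from `0` by a functional `y`, so `(yᵀC)_j > 0` for every column `j`.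
But zero column sums give `(yᵀC)_j = ∑ᵢ (yᵢ - y_j) C_{ij}`, and at an index `j` maximising `y`
every term is `≤ 0` because the off-diagonal entries are nonnegative.
-/

namespace Matrix

theorem exists_vecMul_nonpos_of_sum_col_eq_zero {ι R : Type*} [Fintype ι] [Nonempty ι]
    [CommRing R] [LinearOrder R] [IsOrderedRing R] {C : Matrix ι ι R}
    (hoff : ∀ i j, i ≠ j → 0 ≤ C i j) (hcol : ∀ j, ∑ i, C i j = 0) (y : ι → R) :
    ∃ j, (y ᵥ* C) j ≤ 0 := by
  obtain ⟨j, hj⟩ := Finite.exists_max y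
  refine ⟨j, ?_⟩
  have hshift : (y ᵥ* C) j = ∑ i, (y i - y j) * C i j := by
    simp [vecMul, dotProduct, sub_mul, Finset.sum_sub_distrib, ← Finset.mul_sum, hcol]
  rw [hshift]
  refine Finset.sum_nonpos fun i _ => ?_
  by_cases hij : i = j
  · simp [hij]
  · exact mul_nonpos_of_nonpos_of_nonneg (sub_nonpos.2 (hj i)) (hoff i j hij)

theorem exists_mem_stdSimplex_mulVec_eq_zero {ι : Type*} [Fintype ι] [Nonempty ι]
    {C : Matrix ι ι ℝ} (hoff : ∀ i j, i ≠ j → 0 ≤ C i j) (hcol : ∀ j, ∑ i, C i j = 0) :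
    ∃ k ∈ stdSimplex ℝ ι, C *ᵥ k = 0 := by
  classical
  by_contra! hC
  have h0 : (0 : ι → ℝ) ∉ C.mulVecLin '' stdSimplex ℝ ι := fun ⟨k, hk, hCk⟩ => hC k hk hCk
  have hconv := (convex_stdSimplex ℝ ι).linear_image C.mulVecLin
  have hcpt := (isCompact_stdSimplex ℝ ι).image C.mulVecLin.continuous_of_finiteDimensional
  obtain ⟨f, u, hf0, hf⟩ := geometric_hahn_banach_point_closed hconv hcpt.isClosed h0
  obtain ⟨j, hj⟩ := exists_vecMul_nonpos_of_sum_col_eq_zero hoff hcol fun i => f (Pi.single i 1)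
  have hcolumn : f (C *ᵥ Pi.single j 1) = ((fun i => f (Pi.single i 1)) ᵥ* C) j := by
    rw [mulVec_single_one, ← Finset.univ_sum_single (C.col j), map_sum]
    refine Finset.sum_congr rfl fun i _ => ?_
    change f (Pi.single i (C i j)) = f (Pi.single i 1) * C i j
    rw [mul_comm, ← smul_eq_mul, ← map_smul, ← Pi.single_smul', smul_eq_mul, mul_one]
  have hpos := hf _ ⟨_, single_mem_stdSimplex ℝ j, rfl⟩
  simp only [mulVecLin_apply, map_zero] at hpos hf0
  linarith

end Matrix

/-- If `C` is a Kolmogorov matrix (not necessarily irreducible), then `0`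
is an eigenvalue of `C` admitting a nonzero nonnegative right eigenvector. -/
theorem kolmogorov_exists_nonneg_null_vector (n : ℕ) (hn : 0 < n)
    (C : Matrix (Fin n) (Fin n) ℝ)
    (hoff : ∀ i j, i ≠ j → 0 ≤ C i j)
    (hcol : ∀ j, ∑ i, C i j = 0) :
    ∃ k : Fin n → ℝ, k ≠ 0 ∧ (∀ i, 0 ≤ k i) ∧ C.mulVec k = 0 := by
  have : Nonempty (Fin n) := ⟨⟨0, hn⟩⟩
  obtain ⟨k, hk, hCk⟩ := Matrix.exists_mem_stdSimplex_mulVec_eq_zero hoff hcol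
  refine ⟨k, fun hk0 => ?_, hk.1, hCk⟩
  simpa [hk0] using hk.2
end

section
/- If a Kolmogorov matrix C has both a strictly positive right null vector and the (automatic) strictly positive left null vector 1, and C is reducible into block upper triangular form [[C', A],[0, T]] with C', T square of positive size, then the off-diagonal block A is zero, i.e., C is block diagonal. -/
open Matrix

/-- If a Kolmogorov matrix `C` in block upper triangular form
`[[C', A],[0, T]]` (with nontrivial square blocks) has a strictly positive right null
vector (the strictly positive left null vector `1` being automatic), then the
off-diagonal block `A` is zero, i.e. `C` is block diagonal. -/
theorem kolmogorov_block_triangular_with_positive_null_vector_is_block_diagonal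
    (m p : ℕ) (hm : 0 < m) (hp : 0 < p)
    (C' : Matrix (Fin m) (Fin m) ℝ) (A : Matrix (Fin m) (Fin p) ℝ)
    (T : Matrix (Fin p) (Fin p) ℝ)
    (hoff : ∀ i j, i ≠ j → 0 ≤ Matrix.fromBlocks C' A 0 T i j)
    (hcol : ∀ j, ∑ i, Matrix.fromBlocks C' A 0 T i j = 0)
    (hv : ∃ v : (Fin m ⊕ Fin p) → ℝ, (∀ i, 0 < v i) ∧
      (Matrix.fromBlocks C' A 0 T).mulVec v = 0) :
    A = 0 := by
  obtain ⟨v, hvpos, hnull⟩ := hv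
  have hA : ∀ i j, 0 ≤ A i j := fun i j => by
    simpa using hoff (Sum.inl i) (Sum.inr j) (by simp)
  -- column sums of T equal minus column sums of A
  have hTA : ∀ j, ∑ i, T i j = -∑ i, A i j := by
    intro j
    have := hcol (Sum.inr j)
    rw [Fintype.sum_sum_type] at this
    simp only [Matrix.fromBlocks_apply₁₂, Matrix.fromBlocks_apply₂₂] at this
    linarith
  -- sum of bottom rows of C v = 0
  have key : ∑ j : Fin p, (∑ i : Fin m, A i j) * v (Sum.inr j) = 0 := by
    have h1 : ∑ i : Fin p, (Matrix.fromBlocks C' A 0 T).mulVec v (Sum.inr i) = 0 := by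
      simp [hnull]
    have h2 : ∑ i : Fin p, ∑ j : Fin p, T i j * v (Sum.inr j) = 0 := by
      rw [← h1]
      refine Finset.sum_congr rfl fun i _ => ?_
      rw [Matrix.mulVec, dotProduct, Fintype.sum_sum_type]
      simp
    rw [Finset.sum_comm] at h2
    calc ∑ j : Fin p, (∑ i : Fin m, A i j) * v (Sum.inr j)
        = -∑ j : Fin p, (∑ i : Fin p, T i j) * v (Sum.inr j) := by
          rw [← Finset.sum_neg_distrib]
          refine Finset.sum_congr rfl fun j _ => ?_
          rw [hTA j]; ring
      _ = 0 := by
          have h3 : ∑ j : Fin p, (∑ i : Fin p, T i j) * v (Sum.inr j) = 0 := by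
            rw [← h2]
            exact Finset.sum_congr rfl fun j _ => Finset.sum_mul _ _ _
          rw [h3, neg_zero]
  have hterm : ∀ j : Fin p, (∑ i : Fin m, A i j) * v (Sum.inr j) = 0 := by
    have hnn : ∀ j ∈ Finset.univ, 0 ≤ (∑ i : Fin m, A i j) * v (Sum.inr j) :=
      fun j _ => mul_nonneg (Finset.sum_nonneg fun i _ => hA i j) (hvpos _).le
    intro j
    exact (Finset.sum_eq_zero_iff_of_nonneg hnn).mp key j (Finset.mem_univ j)
  have hcolA : ∀ j, ∑ i, A i j = 0 := fun j => by
    have := hterm j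
    rcases mul_eq_zero.mp this with h | h
    · exact h
    · exact absurd h (hvpos _).ne'
  ext i j
  have := (Finset.sum_eq_zero_iff_of_nonneg (fun i _ => hA i j)).mp (hcolA j) i
    (Finset.mem_univ i)
  simpa using this
end

section
/- If T is a square submatrix block of a Kolmogorov matrix C arising as the lower-right block in a block upper triangular decomposition [[C', A],[0, T]] where A is nonzero in every block row meeting it appropriately (i.e., for each column index j of the T-block there is leakage: the j-th column of C restricted to the T-block sums to a strictly negative number or T is irreducible with some column strictly dominated), then the spectral bound of T is strictly negative. -/
/-!
Let `v` be a left eigenvector of `T` for an eigenvalue `μ` with `0 ≤ Re μ`. At an index `j` where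
`‖v j‖` is maximal, the `j`-th coordinate of `v T = μ v` gives
`-T j j ‖v j‖ ≤ ‖μ - T j j‖ ‖v j‖ ≤ ∑_{i ≠ j} T i j ‖v i‖ ≤ ∑_{i ≠ j} T i j ‖v j‖ ≤ -T j j ‖v j‖`,
so the `j`-th column sum vanishes and every `i` with `T i j ≠ 0` is again a maximal index.
By irreducibility every index is maximal, so no column can leak.
-/

open Matrix

open Finset

theorem Matrix.exists_vecMul_eq_smul_of_mem_spectrum {ι K : Type*} [Fintype ι] [DecidableEq ι]
    [Field K] {A : Matrix ι ι K} {μ : K} (h : μ ∈ spectrum K A) : ∃ v ≠ 0, v ᵥ* A = μ • v := by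
  rw [spectrum.mem_iff, Matrix.isUnit_iff_isUnit_det, isUnit_iff_ne_zero, not_not,
    ← exists_vecMul_eq_zero_iff] at h
  obtain ⟨v, hv, hzero⟩ := h
  refine ⟨v, hv, ?_⟩
  rw [vecMul_sub, sub_eq_zero, Algebra.algebraMap_eq_smul_one, vecMul_smul, vecMul_one] at hzero
  exact hzero.symm

theorem MatIrreducible.forall_of_support_closed {n : ℕ} {A : Matrix (Fin n) (Fin n) ℝ}
    (hA : MatIrreducible A) {P : Fin n → Prop} {j₀ : Fin n} (h₀ : P j₀)
    (hP : ∀ i j, i ≠ j → A i j ≠ 0 → P j → P i) (i : Fin n) : P i := by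
  by_contra hi
  refine hA ⟨{i | ¬P i}, ⟨i, hi⟩, ⟨j₀, not_not.mpr h₀⟩, fun a ha b hb => ?_⟩
  by_contra hab
  exact ha (hP a b (by rintro rfl; exact ha (not_not.mp hb)) hab (not_not.mp hb))

section LeftEigenvector

variable {ι : Type*} [Fintype ι] [DecidableEq ι] {T : Matrix ι ι ℝ} {v : ι → ℂ} {μ : ℂ}

theorem sum_erase_mul_norm_sub_le_sum_mul_norm (hoff : ∀ i j, i ≠ j → 0 ≤ T i j)
    (heig : v ᵥ* T.map (↑) = μ • v) (hμ : 0 ≤ μ.re) (j : ι) :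
    ∑ i ∈ univ.erase j, T i j * (‖v j‖ - ‖v i‖) ≤ (∑ i, T i j) * ‖v j‖ := by
  have hcoord : (μ - T j j) * v j = ∑ i ∈ univ.erase j, T i j * v i := by
    have h := congrFun heig j
    simp only [vecMul, dotProduct, map_apply, Pi.smul_apply, smul_eq_mul] at h
    rw [← add_sum_erase _ _ (mem_univ j)] at h
    simp only [mul_comm (v _)] at h
    linear_combination -h
  have hlow : -T j j * ‖v j‖ ≤ ∑ i ∈ univ.erase j, T i j * ‖v i‖ :=
    calc -T j j * ‖v j‖ ≤ ‖μ - T j j‖ * ‖v j‖ := by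
          gcongr
          have := Complex.re_le_norm (μ - T j j)
          simp only [Complex.sub_re, Complex.ofReal_re] at this
          linarith
      _ = ‖∑ i ∈ univ.erase j, (T i j : ℂ) * v i‖ := by rw [← norm_mul, hcoord]
      _ ≤ ∑ i ∈ univ.erase j, ‖(T i j : ℂ) * v i‖ := norm_sum_le _ _
      _ = ∑ i ∈ univ.erase j, T i j * ‖v i‖ := sum_congr rfl fun i hi => by
          rw [norm_mul, Complex.norm_real, Real.norm_of_nonneg (hoff i j (ne_of_mem_erase hi))]
  rw [← add_sum_erase _ _ (mem_univ j)]
  simp only [mul_sub, sum_sub_distrib, ← sum_mul] at hlow ⊢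
  linarith

theorem sum_apply_eq_zero_of_forall_norm_le (hoff : ∀ i j, i ≠ j → 0 ≤ T i j)
    (hcol : ∀ j, ∑ i, T i j ≤ 0) (heig : v ᵥ* T.map (↑) = μ • v) (hμ : 0 ≤ μ.re) {j : ι}
    (hmax : ∀ k, ‖v k‖ ≤ ‖v j‖) (hv : v j ≠ 0) : ∑ i, T i j = 0 := by
  have hdef : 0 ≤ ∑ i ∈ univ.erase j, T i j * (‖v j‖ - ‖v i‖) :=
    sum_nonneg fun i hi => mul_nonneg (hoff i j (ne_of_mem_erase hi)) (sub_nonneg.mpr (hmax i))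
  exact le_antisymm (hcol j) (nonneg_of_mul_nonneg_left
    (hdef.trans (sum_erase_mul_norm_sub_le_sum_mul_norm hoff heig hμ j)) (norm_pos_iff.mpr hv))

theorem norm_eq_of_forall_norm_le_of_ne_zero (hoff : ∀ i j, i ≠ j → 0 ≤ T i j)
    (hcol : ∀ j, ∑ i, T i j ≤ 0) (heig : v ᵥ* T.map (↑) = μ • v) (hμ : 0 ≤ μ.re) {i j : ι}
    (hmax : ∀ k, ‖v k‖ ≤ ‖v j‖) (hij : i ≠ j) (hT : T i j ≠ 0) : ‖v i‖ = ‖v j‖ := by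
  have hterm : ∀ k ∈ univ.erase j, 0 ≤ T k j * (‖v j‖ - ‖v k‖) := fun k hk =>
    mul_nonneg (hoff k j (ne_of_mem_erase hk)) (sub_nonneg.mpr (hmax k))
  have hdef : ∑ k ∈ univ.erase j, T k j * (‖v j‖ - ‖v k‖) = 0 :=
    le_antisymm ((sum_erase_mul_norm_sub_le_sum_mul_norm hoff heig hμ j).trans
      (mul_nonpos_of_nonpos_of_nonneg (hcol j) (norm_nonneg _))) (sum_nonneg hterm)
  have := (sum_eq_zero_iff_of_nonneg hterm).mp hdef i (mem_erase.mpr ⟨hij, mem_univ i⟩)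
  rcases mul_eq_zero.mp this with h | h
  · exact absurd h hT
  · linarith

end LeftEigenvector

theorem transient_block_spectral_bound_neg_general (p : ℕ)
    (T : Matrix (Fin p) (Fin p) ℝ)
    (hoff : ∀ i j, i ≠ j → 0 ≤ T i j)
    (hcol : ∀ j, ∑ i, T i j ≤ 0)
    (hirr : MatIrreducible T)
    (hleak : ∃ j, ∑ i, T i j < 0) :
    ∀ s : ℝ,
      IsGreatest {x : ℝ | ∃ μ ∈ spectrum ℂ (T.map (fun r => (r : ℂ))), x = μ.re} s →
      s < 0 := by
  rintro s ⟨⟨μ, hμ, rfl⟩, -⟩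
  by_contra! hre
  obtain ⟨v, hv, heig⟩ := Matrix.exists_vecMul_eq_smul_of_mem_spectrum hμ
  obtain ⟨j, hj⟩ := hleak
  have : Nonempty (Fin p) := ⟨j⟩
  obtain ⟨j₀, hj₀⟩ := Finite.exists_max fun i => ‖v i‖
  have hmax : ∀ j k, ‖v k‖ ≤ ‖v j‖ :=
    hirr.forall_of_support_closed hj₀ fun a b hab hT hb k =>
      (hb k).trans (norm_eq_of_forall_norm_le_of_ne_zero hoff hcol heig hre hb hab hT).ge
  have hvj : v j ≠ 0 := by
    obtain ⟨k, hk⟩ := Function.ne_iff.mp hv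
    exact norm_pos_iff.mp ((norm_pos_iff.mpr hk).trans_le (hmax j k))
  exact hj.ne (sum_apply_eq_zero_of_forall_norm_le hoff hcol heig hre (hmax j) hvj)

/-- If `T` is an irreducible matrix with nonnegative off-diagonal
entries, every column sum `≤ 0`, and at least one column sum strictly negative
(as for the lower-right block of a reducible Kolmogorov matrix with leakage), then
the spectral bound of `T` is strictly negative. -/
theorem transient_block_spectral_bound_neg (p : ℕ) (hp : 0 < p)
    (T : Matrix (Fin p) (Fin p) ℝ)
    (hoff : ∀ i j, i ≠ j → 0 ≤ T i j)
    (hcol : ∀ j, ∑ i, T i j ≤ 0)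
    (hirr : MatIrreducible T)
    (hleak : ∃ j, ∑ i, T i j < 0) :
    ∀ s : ℝ,
      IsGreatest {x : ℝ | ∃ μ ∈ spectrum ℂ (T.map (fun r => (r : ℂ))), x = μ.re} s →
      s < 0 :=
  transient_block_spectral_bound_neg_general p T hoff hcol hirr hleak
end

section
/- For a Kolmogorov matrix C, the matrix exponential e^{tC} has nonnegative entries for all t ≥ 0, and the all-ones row vector satisfies 1·e^{tC} = 1·, i.e., e^{tC} preserves column sums (is column-stochastic in the sense that each column of e^{tC} sums to 1). -/
/-!
For `t ≥ 0`, `t • C` is again a Kolmogorov matrix, so it suffices to treat `exp C`.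
Shifting `C` by a large multiple `s • 1` of the identity makes it entrywise
nonnegative, and as `s • 1` is central, `exp C = exp (C + s • 1) * exp (-s • 1)` is a product of
entrywise nonnegative matrices: these form a closed subsemiring, hence are stable under the
exponential series. Since `1 ᵥ* C = 0`, every term of `1 ᵥ* exp C` but the constant one vanishes.
-/

open Matrix

namespace Matrix

variable {ι : Type*} [Fintype ι] [DecidableEq ι]

variable (ι) in
def nonnegSubsemiring : Subsemiring (Matrix ι ι ℝ) where
  carrier := {M | ∀ i j, 0 ≤ M i j}
  mul_mem' hM hN i j := Finset.sum_nonneg fun k _ => mul_nonneg (hM i k) (hN k j)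
  one_mem' i j := by by_cases h : i = j <;> simp [one_apply, h]
  add_mem' hM hN i j := add_nonneg (hM i j) (hN i j)
  zero_mem' _ _ := le_rfl

lemma isClosed_nonnegSubsemiring : IsClosed (nonnegSubsemiring ι : Set (Matrix ι ι ℝ)) := by
  simp only [nonnegSubsemiring, Subsemiring.coe_set_mk, Set.ofPred_forall]
  exact isClosed_iInter fun i => isClosed_iInter fun j =>
    isClosed_le continuous_const ((continuous_apply j).comp (continuous_apply i))

lemma exp_mem_nonnegSubsemiring {A : Matrix ι ι ℝ} (hA : A ∈ nonnegSubsemiring ι) :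
    NormedSpace.exp A ∈ nonnegSubsemiring ι := by
  rw [NormedSpace.exp_eq_tsum_rat]
  refine tsum_mem isClosed_nonnegSubsemiring fun k i j => ?_
  rw [smul_apply]
  exact smul_nonneg (by positivity) (pow_mem hA k i j)

lemma diagonal_mem_nonnegSubsemiring {d : ι → ℝ} (hd : ∀ i, 0 ≤ d i) :
    diagonal d ∈ nonnegSubsemiring ι := fun i j => by
  by_cases h : i = j <;> simp [h, hd]

lemma exists_add_smul_one_mem_nonnegSubsemiring {A : Matrix ι ι ℝ}
    (hA : ∀ i j, i ≠ j → 0 ≤ A i j) : ∃ s : ℝ, A + s • 1 ∈ nonnegSubsemiring ι := by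
  refine ⟨∑ i, |A i i|, fun i j => ?_⟩
  by_cases h : i = j
  · subst h
    have hle : |A i i| ≤ ∑ k, |A k k| :=
      Finset.single_le_sum (f := fun k => |A k k|) (fun k _ => abs_nonneg _) (Finset.mem_univ i)
    simp only [add_apply, smul_apply, one_apply_eq, smul_eq_mul, mul_one]
    linarith [neg_abs_le (A i i)]
  · simpa [h] using hA i j h

theorem exp_mem_nonnegSubsemiring_of_offDiag_nonneg {A : Matrix ι ι ℝ}
    (hA : ∀ i j, i ≠ j → 0 ≤ A i j) : NormedSpace.exp A ∈ nonnegSubsemiring ι := by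
  obtain ⟨s, hs⟩ := exists_add_smul_one_mem_nonnegSubsemiring hA
  have hsplit : A = (A + s • 1) + diagonal fun _ => -s := by
    rw [← smul_one_eq_diagonal, neg_smul, add_neg_cancel_right]
  have hcomm : Commute (A + s • 1) (diagonal fun _ => -s) := by
    rw [← smul_one_eq_diagonal]; exact (Commute.one_right _).smul_right _
  rw [hsplit, exp_add_of_commute _ _ hcomm, exp_diagonal]
  exact mul_mem (exp_mem_nonnegSubsemiring hs)
    (diagonal_mem_nonnegSubsemiring fun _ => by
      rw [Pi.coe_exp, ← Real.exp_eq_exp_ℝ]; exact (Real.exp_pos _).le)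

theorem vecMul_exp_of_vecMul_eq_zero {v : ι → ℝ} {A : Matrix ι ι ℝ} (hA : v ᵥ* A = 0) :
    v ᵥ* NormedSpace.exp A = v := by
  have hterm (k : ℕ) : v ᵥ* ((k.factorial : ℝ)⁻¹ • A ^ k) = if k = 0 then v else 0 := by
    cases k <;> simp [pow_succ', ← vecMul_vecMul, hA, vecMul_smul]
  open scoped Norms.Operator in
  have hexp := (NormedSpace.exp_series_hasSum_exp' (𝕂 := ℝ) A).map
    (AddMonoidHom.mk' (v ᵥ* ·) fun _ _ => vecMul_add _ _ _)
    (continuous_const.matrix_vecMul continuous_id)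
  exact hexp.unique (by simpa [Function.comp_def, hterm] using hasSum_ite_eq 0 v)

theorem exp_mem_colStochastic {A : Matrix ι ι ℝ} (hoff : ∀ i j, i ≠ j → 0 ≤ A i j)
    (hcol : 1 ᵥ* A = 0) : NormedSpace.exp A ∈ colStochastic ℝ ι :=
  ⟨exp_mem_nonnegSubsemiring_of_offDiag_nonneg hoff, vecMul_exp_of_vecMul_eq_zero hcol⟩

end Matrix

/-- For a Kolmogorov matrix `C`, the matrix exponential `e^{tC}` has
nonnegative entries for all `t ≥ 0`, and each column of `e^{tC}` sums to `1`
(equivalently, the all-ones row vector is a fixed left vector of `e^{tC}`). -/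
theorem kolmogorov_exp_nonneg_column_stochastic (n : ℕ)
    (C : Matrix (Fin n) (Fin n) ℝ)
    (hoff : ∀ i j, i ≠ j → 0 ≤ C i j)
    (hcol : ∀ j, ∑ i, C i j = 0) :
    ∀ t : ℝ, 0 ≤ t →
      (∀ i j, 0 ≤ NormedSpace.exp (t • C) i j) ∧
      (fun _ : Fin n => (1 : ℝ)) ᵥ* NormedSpace.exp (t • C) =
        (fun _ : Fin n => (1 : ℝ)) := by
  intro t ht
  have hoff_smul : ∀ i j, i ≠ j → 0 ≤ (t • C) i j := fun i j h => mul_nonneg ht (hoff i j h)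
  have hcol_smul : 1 ᵥ* (t • C) = 0 := by
    ext j
    simp [vecMul, dotProduct, ← Finset.mul_sum, hcol]
  exact exp_mem_colStochastic hoff_smul hcol_smul
end
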